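/- Let (X_n)_{n=0,...,N} be a Gaussian random vector. If for all 0 ≤ n < m ≤ N the support of the conditional law of (X_{n+1},...,X_m) given (X_0,...,X_n) is ℝ^{m−n} almost surely, then Var(X_n − X_{n−1} | X_0,...,X_{n−1}) > 0 for all n = 1,...,N. -/

import Mathlib

open MeasureTheory ProbabilityTheory Set

/-- A random vector is Gaussian if every linear combination of its coordinates is a
real Gaussian random variable. -/
def IsGaussianVector {Ω : Type*} [MeasurableSpace Ω] (P : Measure Ω) {n : ℕ}
    (X : Fin n → Ω → ℝ) : Prop :=
  ∀ l : Fin n → ℝ, ∃ m : ℝ, ∃ v : NNReal,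
    Measure.map (fun ω => ∑ i, l i * X i ω) P = gaussianReal m v

/-- Conditional variance of `X` given the σ-algebra `m`. -/
noncomputable def condVar {Ω : Type*} [m0 : MeasurableSpace Ω] (m : MeasurableSpace Ω)
    (X : Ω → ℝ) (P : @Measure Ω m0) : Ω → ℝ :=
  P[fun ω => (X ω - (P[X|m]) ω) ^ 2 | m]

/-! Conditioning on `W = (X_0, …, X_k)`, the conditional variance of `X_{k+1} - X_k` equals
that of `X_{k+1}`, since `X_k` is a function of `W`, and it is the variance of the first
coordinate under the regular conditional law `condDistrib Z W P (W ω)` of `Z = (X_{k+1})`.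
By hypothesis that law charges every nonempty open set, so a continuous non-constant function
cannot be a.s. constant under it and its variance is positive. -/

namespace ProbabilityTheory

lemma IsGaussianVector.memLp_two {Ω : Type*} [MeasurableSpace Ω] {P : Measure Ω} {n : ℕ}
    {X : Fin n → Ω → ℝ} (hX : IsGaussianVector P X) (hmeas : ∀ i, Measurable (X i))
    (j : Fin n) : MemLp (X j) 2 P := by
  obtain ⟨m, v, hmap⟩ := hX (Pi.single j 1)
  simp only [Pi.single_apply, ite_mul, one_mul, zero_mul, Finset.sum_ite_eq',
    Finset.mem_univ, if_true] at hmap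
  refine (memLp_map_measure_iff aestronglyMeasurable_id (hmeas j).aemeasurable).mp ?_
  rw [hmap]
  exact memLp_id_gaussianReal' 2 ENNReal.ofNat_ne_top

lemma variance_pos_of_isOpenPosMeasure {E : Type*} [TopologicalSpace E] [MeasurableSpace E]
    {μ : Measure E} [IsFiniteMeasure μ] [μ.IsOpenPosMeasure] {f : E → ℝ} (hf : Continuous f)
    (hf_ne : ∃ x y, f x ≠ f y) (hf2 : MemLp f 2 μ) : 0 < Var[f; μ] := by
  refine (variance_nonneg f μ).lt_of_ne fun h => ?_
  have hconst := ae_eq_integral_of_variance_eq_zero hf2 h.symm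
  obtain ⟨x, y, hxy⟩ := hf_ne
  have hne : ∃ z, f z ≠ μ[f] := by
    by_contra! hconst
    exact hxy ((hconst x).trans (hconst y).symm)
  exact (isOpen_ne_fun hf continuous_const).measure_ne_zero μ hne (ae_iff.mp hconst)

section CondDistrib

variable {Ω E F : Type*} [MeasurableSpace Ω] [MeasurableSpace E] [MeasurableSpace F]
  [StandardBorelSpace F] [Nonempty F] {P : Measure Ω} [IsFiniteMeasure P]
  {Z : Ω → F} {W : Ω → E} {f : F → ℝ}

lemma condVar_comap_ae_eq_variance_condDistrib (hW : Measurable W) (hZ : AEMeasurable Z P)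
    (hf : Measurable f) (hfZ : MemLp (f ∘ Z) 2 P) :
    Var[f ∘ Z; P | MeasurableSpace.comap W inferInstance] =ᵐ[P]
      fun ω => Var[f; condDistrib Z W P (W ω)] := by
  set κ := condDistrib Z W P
  set G : E → ℝ := fun x => ∫ v, f v ∂κ x
  have hG : Measurable G :=
    (hf.comp measurable_snd).stronglyMeasurable.integral_kernel_prod_right'.measurable
  have hcondExp : P[f ∘ Z | MeasurableSpace.comap W inferInstance] =ᵐ[P] G ∘ W :=
    condExp_ae_eq_integral_condDistrib hW hZ hf.stronglyMeasurable (hfZ.integrable one_le_two)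
  have hdev : (f ∘ Z - P[f ∘ Z | MeasurableSpace.comap W inferInstance]) ^ 2 =ᵐ[P]
      fun ω => (f (Z ω) - G (W ω)) ^ 2 := by
    filter_upwards [hcondExp] with ω hω
    simp [hω]
  have hdev_int : Integrable (fun ω => (f (Z ω) - G (W ω)) ^ 2) P :=
    (hfZ.sub (hfZ.condExp one_le_two)).integrable_sq.congr hdev
  filter_upwards [(condExp_congr_ae hdev).trans (condExp_prod_ae_eq_integral_condDistrib hW hZ
    (((hf.comp measurable_snd).sub (hG.comp measurable_fst)).pow_const 2).stronglyMeasurable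
    hdev_int)] with ω hω
  rw [condVar, hω, variance_eq_integral hf.aemeasurable]
  rfl

lemma ae_memLp_two_condDistrib (hW : Measurable W) (hZ : AEMeasurable Z P) (hf : Measurable f)
    (hfZ : MemLp (f ∘ Z) 2 P) : ∀ᵐ ω ∂P, MemLp f 2 (condDistrib Z W P (W ω)) := by
  have hsq : Integrable (fun p : E × F => f p.2 ^ 2) (P.map fun ω => (W ω, Z ω)) :=
    (integrable_map_measure ((hf.comp measurable_snd).pow_const 2).aestronglyMeasurable
      (hW.aemeasurable.prodMk hZ)).mpr hfZ.integrable_sq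
  filter_upwards [hsq.condDistrib_ae hW.aemeasurable hZ] with ω hω
  exact (memLp_two_iff_integrable_sq hf.aestronglyMeasurable).mpr hω

lemma ae_condVar_comap_pos [TopologicalSpace F] [OpensMeasurableSpace F] (hW : Measurable W)
    (hZ : AEMeasurable Z P) (hf : Continuous f) (hf_ne : ∃ x y, f x ≠ f y)
    (hfZ : MemLp (f ∘ Z) 2 P)
    (hsupp : ∀ᵐ ω ∂P, (condDistrib Z W P (W ω)).IsOpenPosMeasure) :
    ∀ᵐ ω ∂P, 0 < Var[f ∘ Z; P | MeasurableSpace.comap W inferInstance] ω := by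
  filter_upwards [condVar_comap_ae_eq_variance_condDistrib hW hZ hf.measurable hfZ,
    ae_memLp_two_condDistrib hW hZ hf.measurable hfZ, hsupp] with ω hvar hf2 _
  rw [hvar]
  exact variance_pos_of_isOpenPosMeasure hf hf_ne hf2

end CondDistrib

lemma condVar_sub_ae_eq {Ω : Type*} {m m₀ : MeasurableSpace Ω} {μ : Measure[m₀] Ω}
    (hm : m ≤ m₀) [SigmaFinite (μ.trim hm)] {X Y : Ω → ℝ} (hX : Integrable X μ)
    (hY : Integrable Y μ) (hYm : StronglyMeasurable[m] Y) :
    Var[X - Y; μ | m] =ᵐ[μ] Var[X; μ | m] := by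
  refine condExp_congr_ae ?_
  filter_upwards [condExp_sub hX hY m] with ω hω
  simp [hω, condExp_of_stronglyMeasurable hm hYm hY]

end ProbabilityTheory

/-- **Converse of the discrete-time CFS criterion.** If for all `0 ≤ n < m ≤ N` the
conditional law of `(X_{n+1},…,X_m)` given `(X_0,…,X_n)` has full support `ℝ^{m−n}`
almost surely, then `Var(X_n − X_{n−1} | X_0,…,X_{n−1}) > 0` for all `n = 1,…,N`. -/
theorem discrete_gaussian_CFS_converse {Ω : Type*} [MeasurableSpace Ω] (P : Measure Ω)
    [IsProbabilityMeasure P] (N : ℕ) (X : Fin (N + 1) → Ω → ℝ)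
    (hmeas : ∀ i, Measurable (X i)) (hGauss : IsGaussianVector P X)
    (hsupp : ∀ n m : ℕ, ∀ hnm : n < m, ∀ hmN : m ≤ N,
      ∀ᵐ ω ∂P, ∀ U : Set (Fin (m - n) → ℝ), IsOpen U → U.Nonempty →
        0 < condDistrib
            (fun ω (i : Fin (m - n)) => X ⟨n + 1 + i, by have := i.isLt; omega⟩ ω)
            (fun ω (i : Fin (n + 1)) => X ⟨i, by have := i.isLt; omega⟩ ω) P
            (fun i : Fin (n + 1) => X ⟨i, by have := i.isLt; omega⟩ ω) U) :
    ∀ n : ℕ, 1 ≤ n → (hN : n ≤ N) →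
      ∀ᵐ ω ∂P, 0 < _root_.condVar
        (MeasurableSpace.comap (fun ω (i : Fin n) => X ⟨i, by have := i.isLt; omega⟩ ω)
          inferInstance)
        (fun ω => X ⟨n, by omega⟩ ω - X ⟨n - 1, by omega⟩ ω) P ω := by
  intro n hn hN
  obtain ⟨k, rfl⟩ : ∃ k, n = k + 1 := ⟨n - 1, by omega⟩
  set W : Ω → Fin (k + 1) → ℝ := fun ω i => X ⟨i, by omega⟩ ω
  have hW : Measurable W := measurable_pi_lambda _ fun i => hmeas _
  have hZ : Measurable fun ω (i : Fin (k + 1 - k)) => X ⟨k + 1 + i, by omega⟩ ω :=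
    measurable_pi_lambda _ fun i => hmeas _
  have hXk : StronglyMeasurable[MeasurableSpace.comap W inferInstance] (X ⟨k, by omega⟩) :=
    ((measurable_pi_apply (Fin.last k)).comp (Measurable.of_comap_le le_rfl :
      Measurable[MeasurableSpace.comap W inferInstance] W)).stronglyMeasurable
  have hL2 := hGauss.memLp_two hmeas
  have hXint j : Integrable (X j) P := (hL2 j).integrable one_le_two
  have hdiff := condVar_sub_ae_eq hW.comap_le (hXint ⟨k + 1, by omega⟩) (hXint _) hXk
  have hpos := ae_condVar_comap_pos (f := fun v : Fin (k + 1 - k) → ℝ => v ⟨0, by omega⟩) hW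
    hZ.aemeasurable (continuous_apply _) ⟨0, 1, by simp⟩ (hL2 ⟨k + 1, by omega⟩) (by
      filter_upwards [hsupp k (k + 1) k.lt_succ_self hN] with ω hω
      exact ⟨fun U hU hne => (hω U hU hne).ne'⟩)
  filter_upwards [hdiff, hpos] with ω hdiff hpos
  exact hpos.trans_eq hdiff.symm
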